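/- arXiv:1311.5646 — 4 statements merged into one kernel-verified Lean document; each statement's English description precedes it below -/
import Mathlib

section
/- Let n and ℓ be positive integers with ℓ odd such that Ω_ℓ(n) = (1^ℓ+1)(2^ℓ+1)···(n^ℓ+1) is a powerful number. If p is a prime with (n+1)/2 < p ≤ n+1, then gcd(p(p−1), ℓ) > 1. -/
/-!
If `gcd(p(p-1), ℓ) = 1`, then `x ↦ x^ℓ` is injective on `(ℤ/p)ˣ`, so `a^ℓ ≡ -1 (mod p)` forces
`a ≡ -1 (mod p)`; since `a + 1 ≤ n + 1 < 2p`, the factor `(p-1)^ℓ + 1` is the only one of `Ω_ℓ(n)`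
divisible by `p`. By the binomial theorem `(p-1)^ℓ + 1 ≡ ℓp (mod p²)`, and `p ∤ ℓ`, so this factor
is divisible by `p` exactly once and `Ω_ℓ(n)` is not powerful.
-/

/-- `m` is a powerful number: every prime dividing `m` divides it with exponent at least 2. -/
def IsPowerful (m : ℕ) : Prop := ∀ p : ℕ, p.Prime → p ∣ m → p ^ 2 ∣ m

/-- `Omega ℓ n = (1^ℓ+1)(2^ℓ+1)⋯(n^ℓ+1)`. -/
def Omega (ℓ n : ℕ) : ℕ := ∏ a ∈ Finset.Icc 1 n, (a ^ ℓ + 1)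

theorem IsPowerful.sq_dvd_of_dvd_mul {A B p : ℕ} (hAB : IsPowerful (A * B)) (hp : p.Prime)
    (hpA : p ∣ A) (hpB : ¬ p ∣ B) : p ^ 2 ∣ A :=
  ((hp.coprime_iff_not_dvd.mpr hpB).pow_left 2).dvd_of_dvd_mul_right
    (hAB p hp (hpA.mul_right B))

theorem eq_neg_one_of_pow_eq_neg_one_of_coprime {K : Type*} [Field K] {ℓ : ℕ}
    (hℓ : (Nat.card K - 1).Coprime ℓ) (hodd : Odd ℓ) {x : K} (hx : x ^ ℓ = -1) : x = -1 := by
  have hx0 : x ≠ 0 := by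
    rintro rfl
    simp [zero_pow hodd.pos.ne'] at hx
  rw [← Nat.card_units] at hℓ
  have : Units.mk0 x hx0 = -1 :=
    (powCoprime hℓ).injective <| Units.ext <| by simp [powCoprime, hx, hodd.neg_one_pow]
  simpa using congrArg Units.val this

theorem Nat.Prime.dvd_add_one_of_dvd_pow_add_one {p ℓ a : ℕ} (hp : p.Prime)
    (hℓ : (p - 1).Coprime ℓ) (hodd : Odd ℓ) (h : p ∣ a ^ ℓ + 1) : p ∣ a + 1 := by
  have := Fact.mk hp
  rw [← ZMod.natCast_eq_zero_iff] at h ⊢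
  push_cast at h ⊢
  rw [eq_neg_one_of_pow_eq_neg_one_of_coprime (by rwa [Nat.card_zmod]) hodd
    (eq_neg_of_add_eq_zero_left h), neg_add_cancel]

theorem not_sq_dvd_sub_one_pow_add_one {p ℓ : ℕ} (hp : 1 ≤ p) (hodd : Odd ℓ) (hpℓ : ¬ p ∣ ℓ) :
    ¬ p ^ 2 ∣ (p - 1) ^ ℓ + 1 := by
  intro h
  have hℓ_pred : Even (ℓ - 1) := by obtain ⟨k, rfl⟩ := hodd; simp
  have h_int : (p : ℤ) ^ 2 ∣ (-1 + p) ^ ℓ + 1 := by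
    have := Int.natCast_dvd_natCast.mpr h
    push_cast [Nat.cast_sub hp] at this
    rwa [neg_add_eq_sub]
  have binomial := sq_dvd_add_pow_sub_sub (p : ℤ) (-1) ℓ
  rw [hodd.neg_one_pow, hℓ_pred.neg_one_pow] at binomial
  have : (p : ℤ) * p ∣ p * ℓ := by
    rw [← sq, show (p * ℓ : ℤ) = (-1 + p) ^ ℓ + 1 - ((-1 + p) ^ ℓ - 1 * p * ℓ - -1) by ring]
    exact dvd_sub h_int binomial
  exact hpℓ (Int.natCast_dvd_natCast.mp ((mul_dvd_mul_iff_left (by omega)).mp this))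

theorem Nat.Prime.not_dvd_prod_erase_sub_one {p ℓ n : ℕ} (hp : p.Prime)
    (hℓ : (p - 1).Coprime ℓ) (hodd : Odd ℓ) (hlow : n + 1 < 2 * p) :
    ¬ p ∣ ∏ a ∈ (Finset.Icc 1 n).erase (p - 1), (a ^ ℓ + 1) := by
  rw [hp.prime.dvd_finsetProd_iff]
  rintro ⟨a, ha, hpa⟩
  obtain ⟨ha_ne, ha_mem⟩ := Finset.mem_erase.mp ha
  have ha_le := (Finset.mem_Icc.mp ha_mem).2
  have : a + 1 = p :=
    Nat.eq_of_dvd_of_lt_two_mul (by omega) (hp.dvd_add_one_of_dvd_pow_add_one hℓ hodd hpa)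
      (by omega)
  omega

theorem stmt_3_general (n ℓ : ℕ) (hℓodd : Odd ℓ)
    (hpow : IsPowerful (Omega ℓ n))
    (p : ℕ) (hp : p.Prime) (hlow : n + 1 < 2 * p) (hhigh : p ≤ n + 1) :
    1 < Nat.gcd (p * (p - 1)) ℓ := by
  by_contra h
  have hcop : (p * (p - 1)).Coprime ℓ := by
    have := Nat.gcd_pos_of_pos_right (p * (p - 1)) hℓodd.pos
    unfold Nat.Coprime; omega
  obtain ⟨hpℓ, hp1ℓ⟩ := Nat.coprime_mul_iff_left.mp hcop
  have hp1 := hp.one_le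
  have h_split : Omega ℓ n = ((p - 1) ^ ℓ + 1) * ∏ a ∈ (Finset.Icc 1 n).erase (p - 1), (a ^ ℓ + 1) :=
    have := hp.two_le
    (Finset.mul_prod_erase _ _ (Finset.mem_Icc.mpr ⟨by omega, by omega⟩)).symm
  have hp_dvd : p ∣ (p - 1) ^ ℓ + 1 := by
    simpa [Nat.sub_add_cancel hp1] using hℓodd.nat_add_dvd_pow_add_pow (p - 1) 1
  rw [h_split] at hpow
  exact not_sq_dvd_sub_one_pow_add_one hp1 hℓodd (hp.coprime_iff_not_dvd.mp hpℓ)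
    (hpow.sq_dvd_of_dvd_mul hp hp_dvd (hp.not_dvd_prod_erase_sub_one hp1ℓ hℓodd hlow))

theorem stmt_3 (n ℓ : ℕ) (hn : 0 < n) (hℓpos : 0 < ℓ) (hℓodd : Odd ℓ)
    (hpow : IsPowerful (Omega ℓ n))
    (p : ℕ) (hp : p.Prime) (hlow : n + 1 < 2 * p) (hhigh : p ≤ n + 1) :
    1 < Nat.gcd (p * (p - 1)) ℓ :=
  stmt_3_general n ℓ hℓodd hpow p hp hlow hhigh
end

section
/- Let ℓ be a positive odd integer and n an integer with n ≥ 3. Suppose there exist k distinct primes p₁, p₂, …, p_k, each satisfying (n+1)/2 < pᵢ ≤ n+1, such that for any two indices i ≠ j, the numbers pᵢ − 1 and p_j − 1 have no common odd prime factor. If Ω_ℓ(n) = (1^ℓ+1)(2^ℓ+1)···(n^ℓ+1) is a powerful number, then ℓ has at least k distinct prime factors. -/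
theorem sq_dvd_sub_one_pow_add_one_sub_mul {R : Type*} [CommRing R] (x : R) {ℓ : ℕ}
    (hℓ : Odd ℓ) : x ^ 2 ∣ (x - 1) ^ ℓ + 1 - ℓ * x := by
  have h := sq_dvd_add_pow_sub_sub x (-1) ℓ
  rw [hℓ.neg_one_pow, (Nat.Odd.sub_odd hℓ odd_one).neg_one_pow] at h
  convert h using 1
  ring

theorem Nat.dvd_of_sq_dvd_sub_one_pow_add_one {p ℓ : ℕ} (hp : 0 < p) (hℓ : Odd ℓ)
    (h : p ^ 2 ∣ (p - 1) ^ ℓ + 1) : p ∣ ℓ := by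
  have hint : (p : ℤ) ^ 2 ∣ ((p : ℤ) - 1) ^ ℓ + 1 := by
    have := Int.natCast_dvd_natCast.mpr h
    push_cast [Nat.cast_sub hp] at this
    exact this
  have hℓp : (p : ℤ) ^ 2 ∣ ℓ * p := by
    simpa using hint.sub (sq_dvd_sub_one_pow_add_one_sub_mul (p : ℤ) hℓ)
  rw [sq] at hℓp
  exact_mod_cast Int.dvd_of_mul_dvd_mul_right (by exact_mod_cast hp.ne') hℓp

theorem ZMod.eq_neg_one_of_pow_eq_neg_one {p ℓ : ℕ} [Fact p.Prime] (hℓ : Odd ℓ)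
    (hcop : ℓ.Coprime (p - 1)) {x : ZMod p} (hx : x ^ ℓ = -1) : x = -1 := by
  have hx0 : x ≠ 0 := by
    rintro rfl
    simp [zero_pow hℓ.pos.ne'] at hx
  have hℓ1 : (-x) ^ ℓ = 1 := by rw [hℓ.neg_pow, hx, neg_neg]
  have hp1 : (-x) ^ (p - 1) = 1 := ZMod.pow_card_sub_one_eq_one (neg_ne_zero.mpr hx0)
  have := pow_gcd_eq_one.mpr ⟨hℓ1, hp1⟩
  rw [hcop, pow_one] at this
  exact neg_eq_iff_eq_neg.mp this

theorem Nat.two_mul_le_sub_one_of_dvd {p q : ℕ} (hp : p.Prime) (hq : q.Prime) (hqodd : Odd q)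
    (h : q ∣ p - 1) : 2 * q ≤ p - 1 := by
  have hp2 : p ≠ 2 := by
    rintro rfl
    exact hq.one_lt.ne' (Nat.dvd_one.mp h)
  have h2 : 2 ∣ p - 1 := (Nat.Odd.sub_odd (hp.odd_of_ne_two hp2) odd_one).two_dvd
  exact Nat.le_of_dvd (by have := hp.two_le; omega)
    ((Nat.coprime_two_left.mpr hqodd).mul_dvd_of_dvd_of_dvd h2 h)

theorem Nat.Prime.add_one_eq_of_dvd_pow_add_one {p ℓ a : ℕ} (hp : p.Prime) (hℓ : Odd ℓ)
    (hcop : ℓ.Coprime (p - 1)) (ha : a + 1 < 2 * p) (h : p ∣ a ^ ℓ + 1) : a + 1 = p := by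
  have := Fact.mk hp
  have hpow : (a : ZMod p) ^ ℓ = -1 := by
    rw [← ZMod.natCast_eq_zero_iff] at h
    push_cast at h
    exact eq_neg_of_add_eq_zero_left h
  have hdvd : p ∣ a + 1 := by
    rw [← ZMod.natCast_eq_zero_iff]
    push_cast
    rw [ZMod.eq_neg_one_of_pow_eq_neg_one hℓ hcop hpow, neg_add_cancel]
  exact Nat.eq_of_dvd_of_lt_two_mul a.succ_ne_zero hdvd ha

theorem Nat.Prime.dvd_of_isPowerful_omega {p ℓ n : ℕ} (hp : p.Prime) (hℓ : Odd ℓ)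
    (h2p : n + 1 < 2 * p) (hpn : p ≤ n + 1) (hpow : IsPowerful (Omega ℓ n))
    (hcop : ℓ.Coprime (p - 1)) : p ∣ ℓ := by
  have hmem : p - 1 ∈ Finset.Icc 1 n :=
    Finset.mem_Icc.mpr ⟨by have := hp.two_le; omega, by omega⟩
  have hsplit := (Finset.mul_prod_erase (Finset.Icc 1 n) (fun a => a ^ ℓ + 1) hmem).symm
  have hdvd : p ∣ (p - 1) ^ ℓ + 1 := by
    simpa [Nat.sub_add_cancel hp.one_le] using Odd.nat_add_dvd_pow_add_pow (p - 1) 1 hℓ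
  have hrest : p.Coprime (∏ a ∈ (Finset.Icc 1 n).erase (p - 1), (a ^ ℓ + 1)) := by
    refine Nat.Coprime.prod_right fun a ha => hp.coprime_iff_not_dvd.mpr fun hpa => ?_
    obtain ⟨hne, ha⟩ := Finset.mem_erase.mp ha
    have han := (Finset.mem_Icc.mp ha).2
    have := hp.add_one_eq_of_dvd_pow_add_one hℓ hcop (by omega) hpa
    omega
  refine Nat.dvd_of_sq_dvd_sub_one_pow_add_one hp.pos hℓ ?_
  refine (Nat.Coprime.pow_left 2 hrest).dvd_of_dvd_mul_right ?_
  rw [← hsplit]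
  exact hpow p hp (hdvd.trans (Finset.dvd_prod_of_mem _ hmem))

theorem Nat.Prime.exists_prime_dvd_of_isPowerful_omega {p ℓ n : ℕ} (hp : p.Prime) (hℓ : Odd ℓ)
    (h2p : n + 1 < 2 * p) (hpn : p ≤ n + 1) (hpow : IsPowerful (Omega ℓ n)) :
    ∃ q, q.Prime ∧ q ∣ ℓ ∧ (q = p ∨ q ∣ p - 1) := by
  by_cases hcop : ℓ.Coprime (p - 1)
  · exact ⟨p, hp, hp.dvd_of_isPowerful_omega hℓ h2p hpn hpow hcop, .inl rfl⟩
  · obtain ⟨q, hq, hqℓ, hqp⟩ := Nat.Prime.not_coprime_iff_dvd.mp hcop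
    exact ⟨q, hq, hqℓ, .inr hqp⟩

theorem stmt_4_general (ℓ n k : ℕ) (hℓodd : Odd ℓ)
    (p : Fin k → ℕ) (hinj : Function.Injective p)
    (hprime : ∀ i, (p i).Prime)
    (hrange : ∀ i, n + 1 < 2 * p i ∧ p i ≤ n + 1)
    (hcop : ∀ i j, i ≠ j → ∀ q : ℕ, q.Prime → Odd q →
      q ∣ p i - 1 → ¬ q ∣ p j - 1)
    (hpow : IsPowerful (Omega ℓ n)) :
    k ≤ ℓ.primeFactors.card := by
  choose q hq hqℓ hqp using fun i =>
    (hprime i).exists_prime_dvd_of_isPowerful_omega hℓodd (hrange i).1 (hrange i).2 hpow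
  have hodd i : Odd (q i) := hℓodd.of_dvd_nat (hqℓ i)
  have hlt i j (h : q j ∣ p j - 1) : q j < p i := by
    have := Nat.two_mul_le_sub_one_of_dvd (hprime j) (hq j) (hodd j) h
    have := hrange i
    have := hrange j
    omega
  have hq_inj : Function.Injective q := by
    intro i j hij
    by_contra hne
    rcases hqp i with hi | hi <;> rcases hqp j with hj | hj
    · exact hne (hinj (hi.symm.trans (hij.trans hj)))
    · exact (hlt i j hj).ne (hij ▸ hi)
    · exact (hlt j i hi).ne (hij ▸ hj)
    · exact hcop i j hne (q i) (hq i) (hodd i) hi (hij ▸ hj)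
  simpa using Finset.card_le_card_of_injOn (s := Finset.univ) q
    (fun i _ => Nat.mem_primeFactors.mpr ⟨hq i, hqℓ i, hℓodd.pos.ne'⟩) hq_inj.injOn

theorem stmt_4 (ℓ n k : ℕ) (hℓpos : 0 < ℓ) (hℓodd : Odd ℓ) (hn : 3 ≤ n)
    (p : Fin k → ℕ) (hinj : Function.Injective p)
    (hprime : ∀ i, (p i).Prime)
    (hrange : ∀ i, n + 1 < 2 * p i ∧ p i ≤ n + 1)
    (hcop : ∀ i j, i ≠ j → ∀ q : ℕ, q.Prime → Odd q →
      q ∣ p i - 1 → ¬ q ∣ p j - 1)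
    (hpow : IsPowerful (Omega ℓ n)) :
    k ≤ ℓ.primeFactors.card :=
  stmt_4_general ℓ n k hℓodd p hinj hprime hrange hcop hpow
end

section
/- Let ℓ be a positive odd integer, p an odd prime, and n a positive integer such that p² divides Ω_ℓ(n) = (1^ℓ+1)(2^ℓ+1)···(n^ℓ+1). Suppose there exist a divisor d₁ of ℓ and an integer a with 2 ≤ a ≤ n such that p divides a^{d₁} + 1 but p² does not divide a^{d₁} + 1, and such that for every integer b with 2 ≤ b ≤ n and b ≠ a, p does not divide b^{gcd(ℓ, p−1)} + 1. Then p divides ℓ. -/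
/-- Apply `pow_gcd_eq_one` to `-x`, which satisfies `(-x) ^ ℓ = 1` and `(-x) ^ k = 1`. -/
lemma pow_gcd_eq_neg_one {M : Type*} [Monoid M] [HasDistribNeg M] {x : M} {ℓ k : ℕ}
    (hℓ : Odd ℓ) (hk : Even k) (hxℓ : x ^ ℓ = -1) (hxk : x ^ k = 1) :
    x ^ Nat.gcd ℓ k = -1 := by
  have hneg : (-x) ^ Nat.gcd ℓ k = 1 :=
    pow_gcd_eq_one.mpr ⟨by rw [hℓ.neg_pow, hxℓ, neg_neg], by rw [hk.neg_pow, hxk]⟩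
  have hgcd : Odd (Nat.gcd ℓ k) := hℓ.of_dvd_nat (Nat.gcd_dvd_left ℓ k)
  rw [hgcd.neg_pow] at hneg
  rw [← neg_neg (x ^ _), hneg]

lemma Nat.Prime.dvd_pow_gcd_sub_one_add_one {p ℓ b : ℕ} (hp : p.Prime) (hpodd : Odd p)
    (hℓ : Odd ℓ) (hdvd : p ∣ b ^ ℓ + 1) : p ∣ b ^ Nat.gcd ℓ (p - 1) + 1 := by
  have : Fact p.Prime := ⟨hp⟩
  have hbℓ : (b : ZMod p) ^ ℓ = -1 := by
    rw [eq_neg_iff_add_eq_zero]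
    exact_mod_cast (ZMod.natCast_eq_zero_iff _ _).mpr hdvd
  have hb0 : (b : ZMod p) ≠ 0 := by
    rintro hb
    rw [hb, zero_pow hℓ.pos.ne', zero_eq_neg] at hbℓ
    exact one_ne_zero hbℓ
  have hbg :=
    pow_gcd_eq_neg_one hℓ (Nat.Odd.sub_odd hpodd odd_one) hbℓ (ZMod.pow_card_sub_one_eq_one hb0)
  rw [← ZMod.natCast_eq_zero_iff]
  push_cast
  rw [hbg, neg_add_cancel]

lemma Prime.pow_dvd_of_pow_dvd_prod {M ι : Type*} [CommMonoidWithZero M] [IsCancelMulZero M]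
    [DecidableEq ι] {p : M} (hp : Prime p) {s : Finset ι} {f : ι → M} {a : ι} {k : ℕ}
    (ha : a ∈ s) (hdvd : p ^ k ∣ ∏ i ∈ s, f i) (hrest : ∀ i ∈ s, i ≠ a → ¬ p ∣ f i) :
    p ^ k ∣ f a := by
  rw [← Finset.mul_prod_erase s f ha] at hdvd
  refine hp.pow_dvd_of_dvd_mul_right k ?_ hdvd
  rw [hp.dvd_finsetProd_iff]
  rintro ⟨i, hi, hpi⟩
  exact hrest i (Finset.mem_of_mem_erase hi) (Finset.ne_of_mem_erase hi) hpi

lemma Nat.Prime.dvd_of_sq_dvd_pow_add_one {p x m : ℕ} (hp : p.Prime) (hpodd : Odd p)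
    (hm : Odd m) (hx : p ∣ x + 1) (hx2 : ¬ p ^ 2 ∣ x + 1) (hxm : p ^ 2 ∣ x ^ m + 1) :
    p ∣ m := by
  have : Fact p.Prime := ⟨hp⟩
  have hpx : ¬ p ∣ x := fun h => hp.ne_one (Nat.dvd_one.mp ((Nat.dvd_add_right h).mp hx))
  have hlte := padicValNat.pow_add_pow hpodd (y := 1) hx hpx hm
  rw [one_pow] at hlte
  have hv : padicValNat p (x + 1) < 2 := by
    rwa [← not_le, ← padicValNat_dvd_iff_le (Nat.succ_ne_zero x)]
  have hvm : 2 ≤ padicValNat p (x ^ m + 1) :=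
    (padicValNat_dvd_iff_le (Nat.succ_ne_zero _)).mp hxm
  exact dvd_of_one_le_padicValNat (by omega)

theorem stmt_7_general (ℓ p n : ℕ) (hℓodd : Odd ℓ)
    (hp : p.Prime) (hpodd : Odd p)
    (hpow : p ^ 2 ∣ Omega ℓ n)
    (d₁ a : ℕ) (hd₁ : d₁ ∣ ℓ) (ha2 : 2 ≤ a) (han : a ≤ n)
    (hexact : p ∣ a ^ d₁ + 1 ∧ ¬ p ^ 2 ∣ a ^ d₁ + 1)
    (hb : ∀ b : ℕ, 2 ≤ b → b ≤ n → b ≠ a → ¬ p ∣ b ^ Nat.gcd ℓ (p - 1) + 1) :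
    p ∣ ℓ := by
  obtain ⟨m, rfl⟩ := hd₁
  have hrest : ∀ b ∈ Finset.Icc 1 n, b ≠ a → ¬ p ∣ b ^ (d₁ * m) + 1 := by
    intro b hb_mem hba hpb
    obtain ⟨hb1, hbn⟩ := Finset.mem_Icc.mp hb_mem
    rcases hb1.eq_or_lt with rfl | hb2
    · rw [one_pow, Nat.prime_dvd_prime_iff_eq hp Nat.prime_two] at hpb
      exact Nat.not_even_iff_odd.mpr hpodd (hpb ▸ even_two)
    · exact hb b hb2 hbn hba (hp.dvd_pow_gcd_sub_one_add_one hpodd hℓodd hpb)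
  have ha : p ^ 2 ∣ (a ^ d₁) ^ m + 1 := by
    rw [← pow_mul]
    exact Prime.pow_dvd_of_pow_dvd_prod hp.prime (f := fun b => b ^ (d₁ * m) + 1)
      (Finset.mem_Icc.mpr ⟨by omega, han⟩) hpow hrest
  exact Dvd.dvd.mul_left (hp.dvd_of_sq_dvd_pow_add_one hpodd (Nat.odd_mul.mp hℓodd).2
    hexact.1 hexact.2 ha) d₁

theorem stmt_7 (ℓ p n : ℕ) (hℓpos : 0 < ℓ) (hℓodd : Odd ℓ)
    (hp : p.Prime) (hpodd : Odd p) (hn : 0 < n)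
    (hpow : p ^ 2 ∣ Omega ℓ n)
    (d₁ a : ℕ) (hd₁ : d₁ ∣ ℓ) (ha2 : 2 ≤ a) (han : a ≤ n)
    (hexact : p ∣ a ^ d₁ + 1 ∧ ¬ p ^ 2 ∣ a ^ d₁ + 1)
    (hb : ∀ b : ℕ, 2 ≤ b → b ≤ n → b ≠ a → ¬ p ∣ b ^ Nat.gcd ℓ (p - 1) + 1) :
    p ∣ ℓ :=
  stmt_7_general ℓ p n hℓodd hp hpodd hpow d₁ a hd₁ ha2 han hexact hb
end

section
/- Let p be an odd prime, let ℓ be a positive odd integer with gcd(p(p−1), ℓ) = 1, and let a be a positive integer with p ∣ a^ℓ + 1 and p ∤ a − 1. Then p divides a + 1. -/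
/-! If `a ^ ℓ ≡ -1 (mod p)`, the order of `a` modulo `p` divides both `2ℓ` and `p - 1`; as `ℓ` is
coprime to `p - 1`, it divides `2`, so `a ≡ ±1 (mod p)`, and `a ≢ 1` leaves `a ≡ -1`. -/

theorem pow_eq_one_of_pow_mul_eq_one_of_coprime {M : Type*} [Monoid M] {x : M} {m k n : ℕ}
    (hmk : x ^ (m * k) = 1) (hn : x ^ n = 1) (hkn : k.Coprime n) : x ^ m = 1 := by
  have hgcd : x ^ m.gcd n = 1 := by
    rw [← hkn.gcd_mul_right_cancel m]
    exact pow_gcd_eq_one.2 ⟨hmk, hn⟩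
  obtain ⟨c, hc⟩ := Nat.gcd_dvd_left m n
  rw [hc, pow_mul, hgcd, one_pow]

theorem eq_one_or_eq_neg_one_of_pow_eq_neg_one {R : Type*} [Ring R] [NoZeroDivisors R] {x : R}
    {k n : ℕ} (hk : x ^ k = -1) (hn : x ^ n = 1) (hkn : k.Coprime n) : x = 1 ∨ x = -1 :=
  sq_eq_one_iff.1 <|
    pow_eq_one_of_pow_mul_eq_one_of_coprime (by rw [pow_mul', hk, neg_one_sq]) hn hkn

theorem ZMod.eq_one_or_eq_neg_one_of_pow_eq_neg_one {p : ℕ} [Fact p.Prime] {x : ZMod p} {k : ℕ}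
    (hk0 : k ≠ 0) (hk : x ^ k = -1) (hkp : k.Coprime (p - 1)) : x = 1 ∨ x = -1 := by
  have hx : x ≠ 0 := by
    rintro rfl
    simp [zero_pow hk0] at hk
  exact _root_.eq_one_or_eq_neg_one_of_pow_eq_neg_one hk (ZMod.pow_card_sub_one_eq_one hx) hkp

theorem stmt_19_general (p ℓ a : ℕ) (hp : p.Prime)
    (hℓpos : 0 < ℓ) (hgcd : Nat.gcd (p * (p - 1)) ℓ = 1)
    (ha : 0 < a) (hdvd : p ∣ a ^ ℓ + 1) (hndvd : ¬ p ∣ a - 1) :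
    p ∣ a + 1 := by
  have := Fact.mk hp
  have hcop : ℓ.Coprime (p - 1) := (Nat.Coprime.coprime_dvd_left (dvd_mul_left _ _) hgcd).symm
  have hpow : (a : ZMod p) ^ ℓ = -1 := by
    rw [eq_neg_iff_add_eq_zero]
    exact_mod_cast (ZMod.natCast_eq_zero_iff _ _).2 hdvd
  rcases ZMod.eq_one_or_eq_neg_one_of_pow_eq_neg_one hℓpos.ne' hpow hcop with h | h
  · have hmod : 1 ≡ a [MOD p] := (ZMod.natCast_eq_natCast_iff _ _ _).1 (by simpa using h.symm)
    exact absurd ((Nat.modEq_iff_dvd' ha).1 hmod) hndvd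
  · rw [← ZMod.natCast_eq_zero_iff]
    push_cast
    rw [h, neg_add_cancel]

theorem stmt_19 (p ℓ a : ℕ) (hp : p.Prime) (hpodd : Odd p)
    (hℓpos : 0 < ℓ) (hℓodd : Odd ℓ) (hgcd : Nat.gcd (p * (p - 1)) ℓ = 1)
    (ha : 0 < a) (hdvd : p ∣ a ^ ℓ + 1) (hndvd : ¬ p ∣ a - 1) :
    p ∣ a + 1 :=
  stmt_19_general p ℓ a hp hℓpos hgcd ha hdvd hndvd
end
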